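/- arXiv:0901.2212 — 4 statements merged into one kernel-verified Lean document; each statement's English description precedes it below -/
import Mathlib

section
/- For integers p ≥ 3 and real r with 1 < r ≤ p/2, define the toroidal ball m(r) := {(i,j) ∈ (ℤ/pℤ)² \ {(0,0)} : |(i,j)|_t ≤ r}, where |(i,j)|_t² = (min(i, p−i))² + (min(j, p−j))², representatives taken in {0,…,p−1}. Let r₁ < r₂ be two consecutive radii in the (finite, ordered) set of distinct values {|(i,j)|_t : (i,j) ∈ (ℤ/pℤ)², (i,j) ≠ (0,0)}. Then Card(m(r₂)) ≤ 2 · Card(m(r₁)). -/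
/-!
Every lattice point `w ≠ 0` lies in exactly one of the four half-open quadrants
`{y > 0, z ≥ 0}`, `{y ≤ 0, z > 0}`, `{y < 0, z ≤ 0}`, `{y ≥ 0, z < 0}`, which the rotation by a
right angle permutes cyclically. Moving `w` one step towards the origin along the axis attached
to its quadrant strictly decreases its norm and keeps it inside the box of centred
representatives, and on a circle of squared radius `N ≥ 2` this "pinwheel" map is injective:
within a quadrant it is a translation, and images of different quadrants can only meet on the
unit circle. As no norm lies strictly between `r₁` and `r₂`, the sphere of radius `r₂` thus
injects into the ball of radius `r₁`, and the ball of radius `r₂`, being the union of the two,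
has at most twice as many points.
-/

/-- The squared toroidal norm `|(i,j)|_t² = (min(i, p−i))² + (min(j, p−j))²`,
representatives taken in `{0,…,p−1}`. -/
def tnormSq (p : ℕ) (x : ZMod p × ZMod p) : ℕ :=
  (min x.1.val (p - x.1.val)) ^ 2 + (min x.2.val (p - x.2.val)) ^ 2

open ZMod

def sqNorm (w : ℤ × ℤ) : ℤ := w.1 ^ 2 + w.2 ^ 2

def pinwheel : ℤ × ℤ → ℤ × ℤ
  | (y, z) =>
    if 0 < y ∧ 0 ≤ z then (y - 1, z)
    else if y ≤ 0 ∧ 0 < z then (y, z - 1)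
    else if y < 0 ∧ z ≤ 0 then (y + 1, z)
    else (y, z + 1)

section pinwheel

variable {y z : ℤ}

lemma pinwheel_of_pos_of_nonneg (hy : 0 < y) (hz : 0 ≤ z) : pinwheel (y, z) = (y - 1, z) := by
  simp [pinwheel, hy, hz]

lemma pinwheel_of_nonpos_of_pos (hy : y ≤ 0) (hz : 0 < z) : pinwheel (y, z) = (y, z - 1) := by
  simp [pinwheel, hy, hz, not_lt.2 hy]

lemma pinwheel_of_neg_of_nonpos (hy : y < 0) (hz : z ≤ 0) : pinwheel (y, z) = (y + 1, z) := by
  simp [pinwheel, hy, hz, not_lt.2 hy.le, not_lt.2 hz]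

lemma pinwheel_of_nonneg_of_neg (hy : 0 ≤ y) (hz : z < 0) : pinwheel (y, z) = (y, z + 1) := by
  simp [pinwheel, not_lt.2 hy, not_le.2 hz, not_lt.2 hz.le]

lemma quadrant_cases (h : (y, z) ≠ 0) :
    (0 < y ∧ 0 ≤ z) ∨ (y ≤ 0 ∧ 0 < z) ∨ (y < 0 ∧ z ≤ 0) ∨ (0 ≤ y ∧ z < 0) := by
  simp only [ne_eq, Prod.mk_eq_zero] at h
  omega

end pinwheel

lemma ne_zero_of_two_le_sqNorm {w : ℤ × ℤ} (hw : 2 ≤ sqNorm w) : w ≠ 0 := by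
  rintro rfl
  simp [sqNorm] at hw

lemma sqNorm_pinwheel_lt {w : ℤ × ℤ} (hw : w ≠ 0) : sqNorm (pinwheel w) < sqNorm w := by
  obtain ⟨y, z⟩ := w
  rcases quadrant_cases hw with ⟨hy, hz⟩ | ⟨hy, hz⟩ | ⟨hy, hz⟩ | ⟨hy, hz⟩ <;>
    simp only [sqNorm, pinwheel_of_pos_of_nonneg, pinwheel_of_nonpos_of_pos,
      pinwheel_of_neg_of_nonpos, pinwheel_of_nonneg_of_neg, hy, hz] <;> nlinarith

lemma pinwheel_ne_zero {w : ℤ × ℤ} (hw : 2 ≤ sqNorm w) : pinwheel w ≠ 0 := by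
  obtain ⟨y, z⟩ := w
  rcases quadrant_cases (ne_zero_of_two_le_sqNorm hw) with
    ⟨hy, hz⟩ | ⟨hy, hz⟩ | ⟨hy, hz⟩ | ⟨hy, hz⟩ <;>
    simp only [sqNorm, pinwheel_of_pos_of_nonneg, pinwheel_of_nonpos_of_pos,
      pinwheel_of_neg_of_nonpos, pinwheel_of_nonneg_of_neg, hy, hz, ne_eq, Prod.mk_eq_zero]
      at hw ⊢ <;> rintro ⟨h₁, h₂⟩ <;> subst_vars <;> nlinarith

lemma pinwheel_injOn {N : ℤ} (hN : 2 ≤ N) : Set.InjOn pinwheel {w | sqNorm w = N} := by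
  rintro ⟨y, z⟩ hw ⟨y', z'⟩ hw' h
  simp only [Set.mem_ofPred_eq] at hw hw'
  rcases quadrant_cases (ne_zero_of_two_le_sqNorm (hw ▸ hN)) with
    ⟨hy, hz⟩ | ⟨hy, hz⟩ | ⟨hy, hz⟩ | ⟨hy, hz⟩ <;>
  rcases quadrant_cases (ne_zero_of_two_le_sqNorm (hw' ▸ hN)) with
    ⟨hy', hz'⟩ | ⟨hy', hz'⟩ | ⟨hy', hz'⟩ | ⟨hy', hz'⟩ <;>
    simp only [sqNorm, pinwheel_of_pos_of_nonneg, pinwheel_of_nonpos_of_pos,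
      pinwheel_of_neg_of_nonpos, pinwheel_of_nonneg_of_neg, hy, hz, hy', hz', Prod.mk.injEq]
      at h hw hw' ⊢ <;>
    obtain ⟨h₁, h₂⟩ := h <;> subst_vars <;> first | omega | nlinarith

lemma pinwheel_mem_Ioc {n : ℤ} {w : ℤ × ℤ} (hw : w ≠ 0) (h₁ : w.1 * 2 ∈ Set.Ioc (-n) n)
    (h₂ : w.2 * 2 ∈ Set.Ioc (-n) n) :
    (pinwheel w).1 * 2 ∈ Set.Ioc (-n) n ∧ (pinwheel w).2 * 2 ∈ Set.Ioc (-n) n := by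
  obtain ⟨y, z⟩ := w
  simp only [Set.mem_Ioc] at h₁ h₂ ⊢
  rcases quadrant_cases hw with ⟨hy, hz⟩ | ⟨hy, hz⟩ | ⟨hy, hz⟩ | ⟨hy, hz⟩ <;>
    simp only [pinwheel_of_pos_of_nonneg, pinwheel_of_nonpos_of_pos,
      pinwheel_of_neg_of_nonpos, pinwheel_of_nonneg_of_neg, hy, hz] <;> omega

section torus

variable {p : ℕ}

def centeredLift (x : ZMod p × ZMod p) : ℤ × ℤ := Prod.map valMinAbs valMinAbs x

lemma centeredLift_injective : Function.Injective (centeredLift (p := p)) :=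
  Function.Injective.prodMap injective_valMinAbs injective_valMinAbs

lemma centeredLift_eq_zero_iff {x : ZMod p × ZMod p} : centeredLift x = 0 ↔ x = 0 := by
  simp [centeredLift, Prod.ext_iff, valMinAbs_eq_zero]

lemma ne_zero_of_two_le_tnormSq {x : ZMod p × ZMod p} (hx : 2 ≤ tnormSq p x) : x ≠ 0 := by
  rintro rfl
  simp [tnormSq] at hx

variable [NeZero p]

lemma tnormSq_eq_sqNorm_centeredLift (x : ZMod p × ZMod p) :
    (tnormSq p x : ℤ) = sqNorm (centeredLift x) := by
  simp only [tnormSq, sqNorm, centeredLift, Prod.map_fst, Prod.map_snd,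
    ← valMinAbs_natAbs_eq_min, Nat.cast_add, Nat.cast_pow, Int.natCast_natAbs, sq_abs]

lemma centeredLift_intCast {w : ℤ × ℤ} (h₁ : w.1 * 2 ∈ Set.Ioc (-p : ℤ) p)
    (h₂ : w.2 * 2 ∈ Set.Ioc (-p : ℤ) p) :
    centeredLift (Prod.map ((↑) : ℤ → ZMod p) (↑) w) = w :=
  Prod.ext ((valMinAbs_spec _ _).2 ⟨rfl, h₁⟩) ((valMinAbs_spec _ _).2 ⟨rfl, h₂⟩)

variable (p) in
def torusPinwheel (x : ZMod p × ZMod p) : ZMod p × ZMod p :=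
  Prod.map (↑) (↑) (pinwheel (centeredLift x))

lemma centeredLift_torusPinwheel {x : ZMod p × ZMod p} (hx : x ≠ 0) :
    centeredLift (torusPinwheel p x) = pinwheel (centeredLift x) := by
  obtain ⟨h₁, h₂⟩ := pinwheel_mem_Ioc (centeredLift_eq_zero_iff.not.2 hx)
    (valMinAbs_mem_Ioc x.1) (valMinAbs_mem_Ioc x.2)
  exact centeredLift_intCast h₁ h₂

lemma tnormSq_torusPinwheel_lt {x : ZMod p × ZMod p} (hx : x ≠ 0) :
    tnormSq p (torusPinwheel p x) < tnormSq p x := by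
  have := sqNorm_pinwheel_lt (centeredLift_eq_zero_iff.not.2 hx)
  rw [← centeredLift_torusPinwheel hx, ← tnormSq_eq_sqNorm_centeredLift,
    ← tnormSq_eq_sqNorm_centeredLift] at this
  exact_mod_cast this

lemma torusPinwheel_ne_zero {x : ZMod p × ZMod p} (hx : 2 ≤ tnormSq p x) :
    torusPinwheel p x ≠ 0 := by
  have hx' : (2 : ℤ) ≤ sqNorm (centeredLift x) := by
    rw [← tnormSq_eq_sqNorm_centeredLift]; exact_mod_cast hx
  intro h0
  apply pinwheel_ne_zero hx'
  rw [← centeredLift_torusPinwheel (ne_zero_of_two_le_tnormSq hx), centeredLift_eq_zero_iff]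
  exact h0

lemma torusPinwheel_injOn {N : ℕ} (hN : 2 ≤ N) :
    Set.InjOn (torusPinwheel p) {x | tnormSq p x = N} := by
  intro x hx x' hx' h
  have hlift : ∀ {x : ZMod p × ZMod p}, tnormSq p x = N →
      sqNorm (centeredLift x) = N ∧
        centeredLift (torusPinwheel p x) = pinwheel (centeredLift x) := fun hx =>
    ⟨by rw [← tnormSq_eq_sqNorm_centeredLift, hx],
      centeredLift_torusPinwheel (ne_zero_of_two_le_tnormSq (hx ▸ hN))⟩
  obtain ⟨hnorm, hx⟩ := hlift hx
  obtain ⟨hnorm', hx'⟩ := hlift hx'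
  refine centeredLift_injective (pinwheel_injOn (by exact_mod_cast hN) hnorm hnorm' ?_)
  rw [← hx, ← hx', h]

lemma ncard_tnormSq_eq_le {N : ℕ} (hN : 2 ≤ N) :
    {x : ZMod p × ZMod p | tnormSq p x = N}.ncard ≤
      {x : ZMod p × ZMod p | x ≠ 0 ∧ tnormSq p x < N}.ncard := by
  refine Set.ncard_le_ncard_of_injOn (torusPinwheel p) ?_ (torusPinwheel_injOn hN)
    (Set.toFinite _)
  rintro x (hx : tnormSq p x = N)
  subst hx
  exact ⟨torusPinwheel_ne_zero hN, tnormSq_torusPinwheel_lt (ne_zero_of_two_le_tnormSq hN)⟩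

end torus

theorem stmt_10_general (p : ℕ) [NeZero p] (r₁ r₂ : ℝ)
    (hr₁pos : 1 < r₁) (hlt : r₁ < r₂)
    (hr₂val : ∃ x : ZMod p × ZMod p, x ≠ 0 ∧ r₂ = Real.sqrt (tnormSq p x))
    (hconsec : ∀ d : ℝ,
      (∃ x : ZMod p × ZMod p, x ≠ 0 ∧ d = Real.sqrt (tnormSq p x)) →
      ¬(r₁ < d ∧ d < r₂)) :
    Set.ncard {x : ZMod p × ZMod p | x ≠ 0 ∧ Real.sqrt (tnormSq p x) ≤ r₂} ≤
      2 * Set.ncard {x : ZMod p × ZMod p | x ≠ 0 ∧ Real.sqrt (tnormSq p x) ≤ r₁} := by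
  obtain ⟨x₂, -, rfl⟩ := hr₂val
  set N := tnormSq p x₂
  set B₁ := {x : ZMod p × ZMod p | x ≠ 0 ∧ Real.sqrt (tnormSq p x) ≤ r₁}
  have hgap : ∀ x : ZMod p × ZMod p, x ≠ 0 → Real.sqrt (tnormSq p x) < Real.sqrt N → x ∈ B₁ :=
    fun x hx hlt' => ⟨hx, not_lt.1 fun h => hconsec _ ⟨x, hx, rfl⟩ ⟨h, hlt'⟩⟩
  have hN : 2 ≤ N := by
    have : (1 : ℝ) < N := by simpa using (Real.lt_sqrt zero_le_one).1 (hr₁pos.trans hlt)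
    exact_mod_cast this
  have hball : {x | x ≠ 0 ∧ Real.sqrt (tnormSq p x) ≤ Real.sqrt N} ⊆
      B₁ ∪ {x | tnormSq p x = N} := by
    rintro x ⟨hx, hle⟩
    rcases hle.lt_or_eq with hlt' | heq
    · exact Or.inl (hgap x hx hlt')
    · exact Or.inr (by exact_mod_cast (Real.sqrt_inj (by positivity) (by positivity)).1 heq)
  have hinner : {x : ZMod p × ZMod p | x ≠ 0 ∧ tnormSq p x < N} ⊆ B₁ :=
    fun x ⟨hx, hlt'⟩ => hgap x hx (Real.sqrt_lt_sqrt (by positivity) (by exact_mod_cast hlt'))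
  calc _ ≤ (B₁ ∪ {x | tnormSq p x = N}).ncard := Set.ncard_le_ncard hball (Set.toFinite _)
    _ ≤ B₁.ncard + {x | tnormSq p x = N}.ncard := Set.ncard_union_le _ _
    _ ≤ B₁.ncard + B₁.ncard :=
      Nat.add_le_add_left ((ncard_tnormSq_eq_le hN).trans (Set.ncard_le_ncard hinner)) _
    _ = 2 * B₁.ncard := (two_mul _).symm

theorem stmt_10 (p : ℕ) [NeZero p] (hp : 3 ≤ p) (r₁ r₂ : ℝ)
    (hr₁pos : 1 < r₁) (hr₂le : r₂ ≤ (p : ℝ) / 2) (hlt : r₁ < r₂)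
    (hr₁val : ∃ x : ZMod p × ZMod p, x ≠ 0 ∧ r₁ = Real.sqrt (tnormSq p x))
    (hr₂val : ∃ x : ZMod p × ZMod p, x ≠ 0 ∧ r₂ = Real.sqrt (tnormSq p x))
    (hconsec : ∀ d : ℝ,
      (∃ x : ZMod p × ZMod p, x ≠ 0 ∧ d = Real.sqrt (tnormSq p x)) →
      ¬(r₁ < d ∧ d < r₂)) :
    Set.ncard {x : ZMod p × ZMod p | x ≠ 0 ∧ Real.sqrt (tnormSq p x) ≤ r₂} ≤
      2 * Set.ncard {x : ZMod p × ZMod p | x ≠ 0 ∧ Real.sqrt (tnormSq p x) ≤ r₁} :=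
  stmt_10_general p r₁ r₂ hr₁pos hlt hr₂val hconsec
end

section
/- Let Σ be a p² × p² symmetric positive definite matrix and suppose θ, θ' are p × p matrices with the symmetry θ[i,j]=θ[-i,-j], θ[0,0]=0, such that Σ = σ²(I − C(θ))⁻¹. Define γ(θ'') := (1/p²) tr[(I − C(θ''))Σ(I − C(θ''))] and l(θ',θ) := (1/p²) tr[(C(θ')−C(θ))Σ(C(θ')−C(θ))]. Then γ(θ') − γ(θ) = l(θ', θ) and γ(θ) = σ². In particular γ is minimized at θ. -/
open Matrix

def Cmat (p : ℕ) (θ : Matrix (ZMod p) (ZMod p) ℝ) :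
    Matrix (ZMod p × ZMod p) (ZMod p × ZMod p) ℝ :=
  Matrix.of fun a b => θ (b.1 - a.1) (b.2 - a.2)

theorem stmt_12 (p : ℕ) [NeZero p] (s : ℝ) (hs : 0 < s)
    (θ θ' : Matrix (ZMod p) (ZMod p) ℝ)
    (hθ0 : θ 0 0 = 0) (hθsym : ∀ i j : ZMod p, θ i j = θ (-i) (-j))
    (hθ'0 : θ' 0 0 = 0) (hθ'sym : ∀ i j : ZMod p, θ' i j = θ' (-i) (-j))
    (hpd : (1 - Cmat p θ).PosDef)
    (Sg : Matrix (ZMod p × ZMod p) (ZMod p × ZMod p) ℝ)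
    (hSg : Sg = s • (1 - Cmat p θ)⁻¹) :
    ((1 / (p : ℝ) ^ 2) * Matrix.trace ((1 - Cmat p θ') * Sg * (1 - Cmat p θ')) -
        (1 / (p : ℝ) ^ 2) * Matrix.trace ((1 - Cmat p θ) * Sg * (1 - Cmat p θ)) =
      (1 / (p : ℝ) ^ 2) *
        Matrix.trace ((Cmat p θ' - Cmat p θ) * Sg * (Cmat p θ' - Cmat p θ))) ∧
    (1 / (p : ℝ) ^ 2) * Matrix.trace ((1 - Cmat p θ) * Sg * (1 - Cmat p θ)) = s := by
  have hdet : IsUnit (1 - Cmat p θ).det := isUnit_iff_ne_zero.mpr (ne_of_gt hpd.det_pos)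
  have h1 : Sg * (1 - Cmat p θ) = s • 1 := by
    rw [hSg, Matrix.smul_mul, Matrix.nonsing_inv_mul _ hdet]
  have h2 : (1 - Cmat p θ) * Sg = s • 1 := by
    rw [hSg, Matrix.mul_smul, Matrix.mul_nonsing_inv _ hdet]
  have trC : Matrix.trace (Cmat p θ) = 0 := by
    simp [Matrix.trace, Matrix.diag, Cmat, hθ0]
  have trC' : Matrix.trace (Cmat p θ') = 0 := by
    simp [Matrix.trace, Matrix.diag, Cmat, hθ'0]
  set C := Cmat p θ with hC
  set C' := Cmat p θ' with hC'
  set D := C' - C with hD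
  have trD : Matrix.trace D = 0 := by rw [hD, Matrix.trace_sub, trC, trC']; ring
  have cross1 : Matrix.trace (D * Sg * (1 - C)) = 0 := by
    rw [Matrix.mul_assoc, h1, Matrix.mul_smul, Matrix.mul_one, Matrix.trace_smul, trD,
      smul_zero]
  have cross2 : Matrix.trace ((1 - C) * Sg * D) = 0 := by
    rw [h2, Matrix.smul_mul, Matrix.one_mul, Matrix.trace_smul, trD, smul_zero]
  have hA' : (1 : Matrix (ZMod p × ZMod p) (ZMod p × ZMod p) ℝ) - C' = (1 - C) - D := by
    rw [hD]; abel
  have key2 : Matrix.trace ((1 - C) * Sg * (1 - C)) = s * (p : ℝ) ^ 2 := by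
    rw [h2, Matrix.smul_mul, Matrix.one_mul, Matrix.trace_smul, Matrix.trace_sub, trC,
      Matrix.trace_one]
    rw [sub_zero, smul_eq_mul, Fintype.card_prod, ZMod.card]
    push_cast
    ring
  have hp : (p : ℝ) ≠ 0 := Nat.cast_ne_zero.mpr (NeZero.ne p)
  have main : (1 - C') * Sg * (1 - C')
      = (1 - C) * Sg * (1 - C) - D * Sg * (1 - C) - (1 - C) * Sg * D + D * Sg * D := by
    rw [hA']; noncomm_ring
  constructor
  · rw [main]
    simp only [Matrix.trace_add, Matrix.trace_sub, cross1, cross2]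
    ring
  · rw [key2]
    field_simp
end

section
/- Let X ∈ ℝ^{p²} be a zero-mean Gaussian vector with covariance Σ = σ²(I − C(θ))⁻¹, where I − C(θ) is symmetric positive definite and θ has zero entry at (0,0). For any matrix θ̂ with θ̂[0,0]=0 and θ̂[i,j]=θ̂[-i,-j], the predictor Ŷ := Σ_{(k,l)≠(0,0)} θ̂[k,l] X[k,l] of X[0,0] satisfies E[(X[0,0] − Ŷ)²] = σ² + l(θ̂, θ), where l(θ̂,θ) := (1/p²) tr[(C(θ̂)−C(θ))Σ(C(θ̂)−C(θ))]. -/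
/-!
The residual `X₀ - Σ θ̂ₐ Xₐ` is the linear functional `cᵀX` with `c` the `(0,0)` row of
`A = 1 - C(θ̂)`, so its second moment is `cᵀΣc = (AΣA)₀₀` (`A` is symmetric). Writing
`A = B - D` with `B = 1 - C(θ)`, `D = C(θ̂) - C(θ)` and using `BΣ = ΣB = σ²`, one gets
`AΣA = σ²(B - 2D) + DΣD`, whose `(0,0)` entry is `σ² + (DΣD)₀₀` since `B₀₀ = 1` and
`D₀₀ = 0`.
All matrices involved commute with translations of the torus, so `DΣD` has constant diagonal
and `(DΣD)₀₀ = tr(DΣD) / p²`.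
-/

open Matrix MeasureTheory ProbabilityTheory

open scoped NNReal

namespace Matrix

variable {n R : Type*}

def IsShiftInvariant [Add n] (M : Matrix n n R) : Prop :=
  ∀ t a b : n, M (a + t) (b + t) = M a b

namespace IsShiftInvariant

lemma one [AddRightCancelSemigroup n] [DecidableEq n] [Zero R] [One R] :
    IsShiftInvariant (1 : Matrix n n R) := by
  intro t a b
  simp [one_apply]

lemma sub [Add n] [Sub R] {M N : Matrix n n R} (hM : IsShiftInvariant M)
    (hN : IsShiftInvariant N) : IsShiftInvariant (M - N) := by
  intro t a b
  simp [hM t a b, hN t a b]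

lemma smul [Add n] {S : Type*} [SMul S R] {M : Matrix n n R} (hM : IsShiftInvariant M) (s : S) :
    IsShiftInvariant (s • M) := by
  intro t a b
  simp [hM t a b]

lemma mul [AddGroup n] [Fintype n] [NonUnitalNonAssocSemiring R] {M N : Matrix n n R}
    (hM : IsShiftInvariant M) (hN : IsShiftInvariant N) : IsShiftInvariant (M * N) := by
  intro t a b
  simp only [mul_apply]
  symm
  refine Fintype.sum_equiv (Equiv.addRight t) _ _ fun k => ?_
  rw [Equiv.coe_addRight, hM, hN]

lemma inv [AddGroup n] [Fintype n] [DecidableEq n] [CommRing R] {M : Matrix n n R}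
    (hM : IsShiftInvariant M) : IsShiftInvariant M⁻¹ := by
  intro t a b
  have hshift : M.submatrix (Equiv.addRight t) (Equiv.addRight t) = M := by
    ext i j
    exact hM t i j
  have hinv : (M.submatrix (Equiv.addRight t) (Equiv.addRight t))⁻¹ = M⁻¹ := by rw [hshift]
  rw [inv_submatrix_equiv] at hinv
  exact congrFun (congrFun hinv a) b

lemma apply_self [AddGroup n] {M : Matrix n n R} (hM : IsShiftInvariant M) (a : n) :
    M a a = M 0 0 := by
  simpa using hM a 0 0

lemma trace_eq [AddGroup n] [Fintype n] [AddCommMonoid R] {M : Matrix n n R}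
    (hM : IsShiftInvariant M) : M.trace = Fintype.card n • M 0 0 := by
  simp [trace, hM.apply_self]

end IsShiftInvariant

lemma sub_mul_mul_sub_of_mul_eq_smul_one [Fintype n] [DecidableEq n] [CommRing R]
    {B D S : Matrix n n R} {s : R} (hBS : B * S = s • 1) (hSB : S * B = s • 1) :
    (B - D) * S * (B - D) = s • B - (2 * s) • D + D * S * D := by
  have hexpand : (B - D) * S * (B - D) = B * S * B - B * S * D - D * (S * B) + D * S * D := by
    noncomm_ring
  rw [hexpand, hBS, hSB]
  simp only [smul_mul, one_mul, Matrix.mul_smul, mul_one]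
  rw [two_mul, add_smul]
  abel

lemma sum_mul_mul_eq_mul_mul_transpose [Fintype n] [CommSemiring R]
    (A S : Matrix n n R) (i : n) :
    ∑ a, ∑ b, A i a * S a b * A i b = (A * S * Aᵀ) i i := by
  simp [mul_mul_apply, dotProduct, mulVec, Finset.mul_sum, mul_assoc]

end Matrix

section Torus

variable {p : ℕ}

lemma isShiftInvariant_Cmat (θ : Matrix (ZMod p) (ZMod p) ℝ) :
    (Cmat p θ).IsShiftInvariant := by
  intro t a b
  simp [Cmat]

@[simp]
lemma Cmat_apply_self (θ : Matrix (ZMod p) (ZMod p) ℝ) (a : ZMod p × ZMod p) :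
    Cmat p θ a a = θ 0 0 := by
  simp [Cmat]

lemma transpose_Cmat {θ : Matrix (ZMod p) (ZMod p) ℝ}
    (hθ : ∀ i j : ZMod p, θ i j = θ (-i) (-j)) : (Cmat p θ)ᵀ = Cmat p θ := by
  ext a b
  simp only [Cmat, transpose_apply, of_apply]
  rw [hθ, neg_sub, neg_sub]

lemma one_sub_Cmat_zero_apply [NeZero p] (θ : Matrix (ZMod p) (ZMod p) ℝ)
    (a : ZMod p × ZMod p) : (1 - Cmat p θ) 0 a = (if a = 0 then 1 else 0) - θ a.1 a.2 := by
  simp [Cmat, one_apply, eq_comm]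

end Torus

lemma integral_sq_of_map_eq_gaussianReal {Ω : Type*} {mΩ : MeasurableSpace Ω} {P : Measure Ω}
    {Y : Ω → ℝ} (hY : AEMeasurable Y P) {v : ℝ≥0} (hmap : P.map Y = gaussianReal 0 v) :
    ∫ ω, Y ω ^ 2 ∂P = v := by
  have hsq : ∫ x, x ^ 2 ∂(gaussianReal 0 v) = v := by
    rw [← variance_of_integral_eq_zero aemeasurable_id' integral_id_gaussianReal,
      variance_fun_id_gaussianReal]
  rw [← hsq, ← hmap, integral_map hY (by fun_prop)]

theorem stmt_13_general (p : ℕ) [NeZero p] (s : ℝ) (hs : 0 < s)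
    (θ θhat : Matrix (ZMod p) (ZMod p) ℝ)
    (hθ0 : θ 0 0 = 0)
    (hhat0 : θhat 0 0 = 0) (hhatsym : ∀ i j : ZMod p, θhat i j = θhat (-i) (-j))
    (hpd : (1 - Cmat p θ).PosDef)
    (Sg : Matrix (ZMod p × ZMod p) (ZMod p × ZMod p) ℝ)
    (hSg : Sg = s • (1 - Cmat p θ)⁻¹)
    (Ω : Type) (mΩ : MeasurableSpace Ω) (P : Measure Ω)
    (X : Ω → (ZMod p × ZMod p) → ℝ) (hmeas : Measurable X)
    -- `X` is a centered Gaussian vector with covariance `Sg`: every linear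
    -- functional of `X` is a centered real Gaussian with the induced variance.
    (hGauss : ∀ c : (ZMod p × ZMod p) → ℝ,
      Measure.map (fun ω => ∑ a : ZMod p × ZMod p, c a * X ω a) P =
        gaussianReal 0 (Real.toNNReal
          (∑ a : ZMod p × ZMod p, ∑ b : ZMod p × ZMod p, c a * Sg a b * c b))) :
    (∫ ω, (X ω (0, 0) - ∑ a : ZMod p × ZMod p, θhat a.1 a.2 * X ω a) ^ 2 ∂P) =
      s + (1 / (p : ℝ) ^ 2) *
        Matrix.trace ((Cmat p θhat - Cmat p θ) * Sg * (Cmat p θhat - Cmat p θ)) := by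
  set B := 1 - Cmat p θ
  set D := Cmat p θhat - Cmat p θ
  set A := 1 - Cmat p θhat
  have hABD : A = B - D := by simp only [A, B, D]; abel
  have hresidual : ∀ ω, X ω (0, 0) - ∑ a : ZMod p × ZMod p, θhat a.1 a.2 * X ω a =
      ∑ a, A 0 a * X ω a := by
    intro ω
    simp only [A, one_sub_Cmat_zero_apply]
    simp [sub_mul, Finset.sum_sub_distrib, Prod.zero_eq_mk]
  have hSg_psd : Sg.PosSemidef := hSg ▸ hpd.inv.posSemidef.smul hs.le
  have hvar_nonneg : 0 ≤ ∑ a, ∑ b, A 0 a * Sg a b * A 0 b := by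
    simpa [dotProduct, mulVec, Finset.mul_sum, mul_assoc] using
      hSg_psd.dotProduct_mulVec_nonneg (A 0)
  have hsecond_moment : ∫ ω, (∑ a, A 0 a * X ω a) ^ 2 ∂P = (A * Sg * A) 0 0 := by
    rw [integral_sq_of_map_eq_gaussianReal (by fun_prop) (hGauss (A 0)),
      Real.coe_toNNReal _ hvar_nonneg, sum_mul_mul_eq_mul_mul_transpose]
    simp [A, transpose_Cmat hhatsym]
  have hdet : IsUnit B.det := B.isUnit_iff_isUnit_det.mp hpd.isUnit
  have hBSg : B * Sg = s • 1 := by rw [hSg, Matrix.mul_smul, mul_nonsing_inv _ hdet]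
  have hSgB : Sg * B = s • 1 := by rw [hSg, smul_mul, nonsing_inv_mul _ hdet]
  have hB_shift : B.IsShiftInvariant := IsShiftInvariant.one.sub (isShiftInvariant_Cmat θ)
  have hD_shift : D.IsShiftInvariant := (isShiftInvariant_Cmat θhat).sub (isShiftInvariant_Cmat θ)
  have hshift : (D * Sg * D).IsShiftInvariant :=
    (hD_shift.mul (hSg ▸ hB_shift.inv.smul s)).mul hD_shift
  have hp : (p : ℝ) ≠ 0 := NeZero.ne _
  simp only [hresidual]
  rw [hsecond_moment, hABD, sub_mul_mul_sub_of_mul_eq_smul_one hBSg hSgB, hshift.trace_eq]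
  simp [B, D, hθ0, hhat0]
  field_simp

theorem stmt_13 (p : ℕ) [NeZero p] (s : ℝ) (hs : 0 < s)
    (θ θhat : Matrix (ZMod p) (ZMod p) ℝ)
    (hθ0 : θ 0 0 = 0) (hθsym : ∀ i j : ZMod p, θ i j = θ (-i) (-j))
    (hhat0 : θhat 0 0 = 0) (hhatsym : ∀ i j : ZMod p, θhat i j = θhat (-i) (-j))
    (hpd : (1 - Cmat p θ).PosDef)
    (Sg : Matrix (ZMod p × ZMod p) (ZMod p × ZMod p) ℝ)
    (hSg : Sg = s • (1 - Cmat p θ)⁻¹)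
    (Ω : Type) (mΩ : MeasurableSpace Ω) (P : Measure Ω) (hP : IsProbabilityMeasure P)
    (X : Ω → (ZMod p × ZMod p) → ℝ) (hmeas : Measurable X)
    -- `X` is a centered Gaussian vector with covariance `Sg`: every linear
    -- functional of `X` is a centered real Gaussian with the induced variance.
    (hGauss : ∀ c : (ZMod p × ZMod p) → ℝ,
      Measure.map (fun ω => ∑ a : ZMod p × ZMod p, c a * X ω a) P =
        gaussianReal 0 (Real.toNNReal
          (∑ a : ZMod p × ZMod p, ∑ b : ZMod p × ZMod p, c a * Sg a b * c b))) :
    (∫ ω, (X ω (0, 0) - ∑ a : ZMod p × ZMod p, θhat a.1 a.2 * X ω a) ^ 2 ∂P) =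
      s + (1 / (p : ℝ) ^ 2) *
        Matrix.trace ((Cmat p θhat - Cmat p θ) * Sg * (Cmat p θhat - Cmat p θ)) :=
  stmt_13_general p s hs θ θhat hθ0 hhat0 hhatsym hpd Sg hSg Ω mΩ P X hmeas hGauss
end

section
/- Let Σ be symmetric positive definite of size p² with Σ = σ²(I − C(θ))⁻¹, and let θ', θ ∈ Θ⁺ (so I − C(θ') and I − C(θ) are symmetric block circulant positive definite). Then the 'empirical contrast at the population level' satisfies the identity: (1/p²) tr[((I−C(θ'))² − (I−C(θ))²) Σ] = l(θ',θ), where l(θ',θ) := (1/p²) tr[(C(θ')−C(θ)) Σ (C(θ')−C(θ))]. -/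
open Matrix

lemma Cmat_commute (p : ℕ) [NeZero p] (θ θ' : Matrix (ZMod p) (ZMod p) ℝ) :
    Cmat p θ * Cmat p θ' = Cmat p θ' * Cmat p θ := by
  ext a b
  simp only [Matrix.mul_apply, Cmat, Matrix.of_apply]
  refine Fintype.sum_equiv (Equiv.subLeft ((a.1 + b.1, a.2 + b.2) : ZMod p × ZMod p))
    _ _ fun c => ?_
  simp only [Equiv.subLeft_apply, Prod.fst_sub, Prod.snd_sub]
  have h1 : a.1 + b.1 - c.1 - a.1 = b.1 - c.1 := by ring
  have h2 : a.2 + b.2 - c.2 - a.2 = b.2 - c.2 := by ring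
  have h3 : b.1 - (a.1 + b.1 - c.1) = c.1 - a.1 := by ring
  have h4 : b.2 - (a.2 + b.2 - c.2) = c.2 - a.2 := by ring
  rw [h1, h2, h3, h4, mul_comm]

lemma Cmat_trace (p : ℕ) [NeZero p] (θ : Matrix (ZMod p) (ZMod p) ℝ)
    (hθ0 : θ 0 0 = 0) : Matrix.trace (Cmat p θ) = 0 := by
  simp [Matrix.trace, Matrix.diag, Cmat, hθ0]

theorem stmt_14 (p : ℕ) [NeZero p] (s : ℝ) (hs : 0 < s)
    (θ θ' : Matrix (ZMod p) (ZMod p) ℝ)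
    (hθ0 : θ 0 0 = 0) (hθsym : ∀ i j : ZMod p, θ i j = θ (-i) (-j))
    (hθ'0 : θ' 0 0 = 0) (hθ'sym : ∀ i j : ZMod p, θ' i j = θ' (-i) (-j))
    (hpd : (1 - Cmat p θ).PosDef) (hpd' : (1 - Cmat p θ').PosDef)
    (Sg : Matrix (ZMod p × ZMod p) (ZMod p × ZMod p) ℝ)
    (hSg : Sg = s • (1 - Cmat p θ)⁻¹) :
    (1 / (p : ℝ) ^ 2) *
        Matrix.trace (((1 - Cmat p θ') ^ 2 - (1 - Cmat p θ) ^ 2) * Sg) =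
      (1 / (p : ℝ) ^ 2) *
        Matrix.trace ((Cmat p θ' - Cmat p θ) * Sg * (Cmat p θ' - Cmat p θ)) := by
  set A := 1 - Cmat p θ with hA
  set D := Cmat p θ' - Cmat p θ with hD
  have hB : (1 : Matrix (ZMod p × ZMod p) (ZMod p × ZMod p) ℝ) - Cmat p θ' = A - D := by
    rw [hA, hD]; abel
  have hcomm : Commute (Cmat p θ) (Cmat p θ') := Cmat_commute p θ θ'
  have hAD : Commute A D :=
    ((Commute.one_left _).sub_left hcomm).sub_right ((Commute.one_left _).sub_left (Commute.refl _))
  -- invertibility of A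
  have : Invertible A := Matrix.invertibleOfIsUnitDet A (isUnit_iff_ne_zero.mpr hpd.det_pos.ne')
  have hinv : ⅟A = A⁻¹ := invOf_eq_nonsing_inv A
  have hAinvD : Commute A⁻¹ D := by
    rw [← hinv]; exact hAD.invOf_left
  have hAAinv : A * A⁻¹ = 1 := by
    rw [← hinv]; exact mul_invOf_self A
  -- key matrix identity
  have hsq : (A - D) ^ 2 - A ^ 2 = D * D - A * D - D * A := by noncomm_ring
  have key : (((1 : Matrix (ZMod p × ZMod p) (ZMod p × ZMod p) ℝ) - Cmat p θ') ^ 2 - A ^ 2) * Sg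
      = D * Sg * D - (2 * s) • D := by
    rw [hB, hsq, hSg]
    have h1 : A * D * A⁻¹ = D := by rw [hAD.eq, mul_assoc, hAAinv, mul_one]
    have h2 : D * A * A⁻¹ = D := by rw [mul_assoc, hAAinv, mul_one]
    have h3 : D * D * A⁻¹ = D * A⁻¹ * D := by
      rw [mul_assoc]
      conv_lhs => rw [← hAinvD.eq]
      rw [← mul_assoc]
    rw [Matrix.mul_smul, Matrix.mul_smul, Matrix.smul_mul, Matrix.sub_mul, Matrix.sub_mul,
      h1, h2, h3, smul_sub, smul_sub, two_mul, add_smul]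
    abel
  have hDtr : Matrix.trace D = 0 := by
    rw [hD, Matrix.trace_sub, Cmat_trace p θ hθ0, Cmat_trace p θ' hθ'0, sub_zero]
  rw [key, Matrix.trace_sub, Matrix.trace_smul, hDtr]
  simp
end
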